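/- arXiv:2511.12862 — 2 statements merged into one kernel-verified Lean document; each statement's English description precedes it below -/
import Mathlib

section
/- Let g ≥ 2 and let G be the surface group with the symmetric presentation. For every b_1⋯b_{4g} ∈ R and every integer t ≥ 0, the identity b_1·(b_2⋯b_{2g})^t·b_{2g+1} = (b_{2g}b_{2g-1}⋯b_2)^t holds in G, where each letter b_i is interpreted as the element of G it represents. Consequently, for every t ≥ 0 the word b_1(b_2⋯b_{2g})^t b_{2g+1} is not irreducible. -/
namespace Surface

/-- Letters: `(i, true)` is the generator `c_{i+1}`, `(i, false)` is its inverse. -/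
abbrev Letter (g : ℕ) := Fin (2 * g) × Bool

/-- Words over the alphabet `S^±`. -/
abbrev Word (g : ℕ) := List (Letter g)

/-- The inverse of a letter. -/
def invLetter {g : ℕ} (a : Letter g) : Letter g := (a.1, !a.2)

/-- The formal inverse of a word: reverse it and invert every letter. -/
def invWord {g : ℕ} (w : Word g) : Word g := (w.map invLetter).reverse

/-- The relator `c₁ ⋯ c_{2g} · c₁⁻¹ ⋯ c_{2g}⁻¹` of the symmetric presentation. -/
def relator (g : ℕ) : FreeGroup (Fin (2 * g)) :=
  (List.ofFn fun i : Fin (2 * g) => FreeGroup.of i).prod *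
    (List.ofFn fun i : Fin (2 * g) => (FreeGroup.of i)⁻¹).prod

/-- The surface group with the symmetric presentation
`⟨c₁, …, c_{2g} ∣ c₁ ⋯ c_{2g} c₁⁻¹ ⋯ c_{2g}⁻¹⟩`. -/
abbrev SurfaceGroup (g : ℕ) : Type :=
  PresentedGroup ({relator g} : Set (FreeGroup (Fin (2 * g))))

/-- The element of the surface group represented by a letter. -/
def letterElt {g : ℕ} (a : Letter g) : SurfaceGroup g :=
  if a.2 then PresentedGroup.of a.1 else (PresentedGroup.of a.1)⁻¹

/-- The element of the surface group represented by a word. -/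
def eval {g : ℕ} (w : Word g) : SurfaceGroup g := (w.map letterElt).prod

/-- The word length of an element: the least `n` such that the element is a product of
`n` elements of `S^±`, i.e. is represented by a word of length `n`. -/
noncomputable def wordLength {g : ℕ} (x : SurfaceGroup g) : ℕ :=
  sInf {n : ℕ | ∃ w : Word g, w.length = n ∧ eval w = x}

/-- Rank of letters, realizing the order
`c_{2g} ≺ ⋯ ≺ c₂ ≺ c₁ ≺ c₁⁻¹ ≺ c₂⁻¹ ≺ ⋯ ≺ c_{2g}⁻¹`. -/
def rank {g : ℕ} (a : Letter g) : ℕ :=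
  if a.2 then 2 * g - 1 - (a.1 : ℕ) else 2 * g + (a.1 : ℕ)

/-- The strict order `≺` on letters. -/
def letterLt {g : ℕ} (a b : Letter g) : Prop := rank a < rank b

/-- The strict length-lexicographical order on words. -/
def wordLt {g : ℕ} (w₁ w₂ : Word g) : Prop :=
  w₁.length < w₂.length ∨ (w₁.length = w₂.length ∧ List.Lex letterLt w₁ w₂)

/-- The (non-strict) length-lexicographical order on words. -/
def wordLe {g : ℕ} (w₁ w₂ : Word g) : Prop := w₁ = w₂ ∨ wordLt w₁ w₂

/-- `w` is the length-lexicographically least word representing `x`, i.e. `w` is the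
normal form `nf(x)` of `x`. -/
def IsNormalForm {g : ℕ} (x : SurfaceGroup g) (w : Word g) : Prop :=
  eval w = x ∧ ∀ w' : Word g, eval w' = x → wordLe w w'

/-- A word is irreducible if it is the normal form of the element it represents. -/
def Irred {g : ℕ} (w : Word g) : Prop := IsNormalForm (eval w) w

/-- A word is freely reduced if no letter is immediately followed by its inverse. -/
def FreelyReduced {g : ℕ} (w : Word g) : Prop :=
  List.Chain' (fun a b => b ≠ invLetter a) w

/-- A word is cyclically freely reduced if it is freely reduced and moreover its first
letter is not the inverse of its last letter. -/
def CyclicallyFreelyReduced {g : ℕ} (w : Word g) : Prop :=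
  FreelyReduced w ∧
    ∀ a b : Letter g, w.head? = some a → w.getLast? = some b → a ≠ invLetter b

/-- The `n`-fold concatenation of a word with itself. -/
def wpow {g : ℕ} (w : Word g) : ℕ → Word g
  | 0 => []
  | n + 1 => w ++ wpow w n

/-- The contiguous segment of `w` of length `len` starting at (0-indexed) position `a`. -/
def seg {g : ℕ} (w : Word g) (a len : ℕ) : Word g := (w.drop a).take len

/-- The relator as a word. -/
def relWord (g : ℕ) : Word g :=
  (List.ofFn fun i : Fin (2 * g) => ((i, true) : Letter g)) ++
    List.ofFn fun i : Fin (2 * g) => ((i, false) : Letter g)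

/-- The set `R` of all cyclic permutations of the relator word and of its formal
inverse word. -/
def RSet (g : ℕ) : Set (Word g) :=
  {w | List.IsRotated w (relWord g) ∨ List.IsRotated w (invWord (relWord g))}

/-- Words of type `S_(1)`: `b b⁻¹` for a letter `b`. -/
def TypeS1 {g : ℕ} (v : Word g) : Prop := ∃ a : Letter g, v = [a, invLetter a]

/-- Words of type `S_(2,k)`: the prefix of length `k` of some `b₁ ⋯ b_{4g} ∈ R`. -/
def TypeS2 {g : ℕ} (k : ℕ) (v : Word g) : Prop := ∃ r ∈ RSet g, v = r.take k

/-- Words of type `S_(3,t)`: `b₁ (b₂ ⋯ b_{2g})^t b_{2g+1}` for some `b₁ ⋯ b_{4g} ∈ R`. -/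
def TypeS3 {g : ℕ} (t : ℕ) (v : Word g) : Prop :=
  ∃ r ∈ RSet g, v = r.take 1 ++ wpow (seg r 1 (2 * g - 1)) t ++ seg r (2 * g) 1

/-- Words of type `S_(4,t)`: `b₁ (b₂ ⋯ b_{2g})^t` or `(b₁ ⋯ b_{2g-1})^t b_{2g}` for some
`b₁ ⋯ b_{4g} ∈ R` with `b₁ ≻ b_{2g}`. -/
def TypeS4 {g : ℕ} (t : ℕ) (v : Word g) : Prop :=
  ∃ r ∈ RSet g, ∃ b₁ bm : Letter g,
    r.take 1 = [b₁] ∧ seg r (2 * g - 1) 1 = [bm] ∧ letterLt bm b₁ ∧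
      (v = r.take 1 ++ wpow (seg r 1 (2 * g - 1)) t ∨
        v = wpow (r.take (2 * g - 1)) t ++ seg r (2 * g - 1) 1)

/-- A fractional relator: a word of length at least `2` occurring as a contiguous
subword of some element of `R`. -/
def IsFracRel {g : ℕ} (v : Word g) : Prop := 2 ≤ v.length ∧ ∃ r ∈ RSet g, v <:+: r

/-- The segment of `W` of length `len` starting at position `a` is a locally longest
fractional relator (LLFR) of `W`: it is a fractional relator, and neither its one-letter
extension to the left within `W` nor to the right within `W` is a fractional relator. -/
def IsLLFRAt {g : ℕ} (W : Word g) (a len : ℕ) : Prop :=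
  a + len ≤ W.length ∧ IsFracRel (seg W a len) ∧
    (a = 0 ∨ ¬IsFracRel (seg W (a - 1) (len + 1))) ∧
    (a + len = W.length ∨ ¬IsFracRel (seg W a (len + 1)))

/-- The splitting condition entering the definition of the reducing-subword pair:
`W₁ = A ++ C₁`, `W₂ = C₂ ++ B` and `nf(W₁ W₂) = A ++ C' ++ B` for some `C'`. -/
def SplitCond {g : ℕ} (W₁ W₂ C₁ C₂ : Word g) : Prop :=
  ∃ A B C' : Word g, W₁ = A ++ C₁ ∧ W₂ = C₂ ++ B ∧
    IsNormalForm (eval (W₁ ++ W₂)) (A ++ C' ++ B)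

/-- The lexicographic order on pairs of words induced by the length-lexicographical
order on words. -/
def pairLe {g : ℕ} (p q : Word g × Word g) : Prop :=
  wordLt p.1 q.1 ∨ (p.1 = q.1 ∧ wordLe p.2 q.2)

/-- `(C₁, C₂)` is the reducing-subword pair `rp(W₁, W₂)`: the least pair satisfying the
splitting condition. -/
def IsRP {g : ℕ} (W₁ W₂ C₁ C₂ : Word g) : Prop :=
  SplitCond W₁ W₂ C₁ C₂ ∧
    ∀ C₁' C₂' : Word g, SplitCond W₁ W₂ C₁' C₂' → pairLe (C₁, C₂) (C₁', C₂')

/-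
Every element of `R` has the shape `r = b u b⁻¹ u⁻¹` with `u = b₂ ⋯ b_{2g}`, where `u⁻¹` is
the formal inverse word. Since `r = 1` in `G`, conjugation by `b` sends `u` to the reversed
word `u.reverse`, hence `b u^t b⁻¹ = (u.reverse)^t`. The right-hand side is a word that is two
letters shorter than `b u^t b⁻¹`, so the latter is not the normal form of its value.
-/

section Words

variable {g : ℕ}

@[simp]
lemma eval_nil : eval ([] : Word g) = 1 := rfl

@[simp]
lemma eval_cons (a : Letter g) (w : Word g) : eval (a :: w) = letterElt a * eval w := by
  simp [eval]

@[simp]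
lemma eval_append (w₁ w₂ : Word g) : eval (w₁ ++ w₂) = eval w₁ * eval w₂ := by
  simp [eval]

@[simp]
lemma invLetter_invLetter (a : Letter g) : invLetter (invLetter a) = a := by
  simp [invLetter]

@[simp]
lemma letterElt_invLetter (a : Letter g) : letterElt (invLetter a) = (letterElt a)⁻¹ := by
  obtain ⟨i, _ | _⟩ := a <;> simp [letterElt, invLetter]

lemma eval_map_invLetter (w : Word g) : eval (w.map invLetter) = (eval w.reverse)⁻¹ := by
  induction w with
  | nil => simp
  | cons a w ih => simp [ih]

lemma eval_invWord (w : Word g) : eval (invWord w) = (eval w)⁻¹ := by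
  rw [invWord, ← List.map_reverse, eval_map_invLetter, List.reverse_reverse]

lemma eval_wpow (w : Word g) (n : ℕ) : eval (wpow w n) = eval w ^ n := by
  induction n with
  | zero => simp [wpow]
  | succ n ih => rw [wpow, eval_append, ih, pow_succ']

lemma length_wpow (w : Word g) (n : ℕ) : (wpow w n).length = n * w.length := by
  induction n with
  | zero => simp [wpow]
  | succ n ih => rw [wpow, List.length_append, ih, Nat.succ_mul, Nat.add_comm]

lemma eval_eq_one_of_isRotated {w v : Word g} (h : w ~r v) (hv : eval v = 1) :
    eval w = 1 := by
  obtain ⟨n, rfl⟩ := h.symm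
  rw [List.rotate_eq_drop_append_take_mod, eval_append, mul_eq_one_comm, ← eval_append,
    List.take_append_drop, hv]

lemma not_irred_of_eval_eq_of_length_lt {w w' : Word g} (heval : eval w' = eval w)
    (hlen : w'.length < w.length) : ¬Irred w := by
  rintro ⟨-, hmin⟩
  rcases hmin w' heval with rfl | hlt | ⟨heq, -⟩ <;> omega

end Words

section Relators

variable {g : ℕ}

lemma exists_rotate_append_map_invLetter_eq (X : Word g) (n : ℕ) :
    ∃ Y : Word g, Y.length = X.length ∧
      (X ++ X.map invLetter).rotate n = Y ++ Y.map invLetter := by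
  induction n generalizing X with
  | zero => exact ⟨X, rfl, List.rotate_zero _⟩
  | succ n ih =>
    cases X with
    | nil => exact ⟨[], rfl, rfl⟩
    | cons b X =>
      -- rotating `(b :: X) ++ (b⁻¹ :: X⁻¹)` by one letter gives `X' X'⁻¹` with `X' = X ++ [b⁻¹]`
      obtain ⟨Y, hY, hrot⟩ := ih (X ++ [invLetter b])
      exact ⟨Y, by simpa using hY, by simpa using hrot⟩

lemma exists_eq_append_map_invLetter_of_isRotated {w X : Word g}
    (h : w ~r X ++ X.map invLetter) :
    ∃ Y : Word g, Y.length = X.length ∧ w = Y ++ Y.map invLetter := by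
  obtain ⟨n, rfl⟩ := h.symm
  exact exists_rotate_append_map_invLetter_eq X n

lemma invWord_append_map_invLetter (X : Word g) :
    invWord (X ++ X.map invLetter) = X.reverse ++ X.reverse.map invLetter := by
  simp [invWord, List.map_map, Function.comp_def, List.map_reverse]

lemma relWord_eq : relWord g = List.ofFn (fun i => ((i, true) : Letter g)) ++
    (List.ofFn fun i => ((i, true) : Letter g)).map invLetter := by
  rw [relWord, List.map_ofFn]
  rfl

lemma eval_relWord : eval (relWord g) = 1 := by
  have : eval (relWord g) = PresentedGroup.mk _ (relator g) := by
    conv_rhs => arg 2; rw [relator]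
    rw [map_mul, map_list_prod, map_list_prod, List.map_ofFn, List.map_ofFn]
    simp [relWord, eval, letterElt, List.map_ofFn, Function.comp_def, PresentedGroup.of]
  rw [this]
  exact (QuotientGroup.eq_one_iff _).mpr (Subgroup.subset_normalClosure rfl)

lemma exists_eq_append_map_invLetter_of_mem_RSet {r : Word g} (hr : r ∈ RSet g) :
    ∃ Y : Word g, Y.length = 2 * g ∧ r = Y ++ Y.map invLetter := by
  rcases hr with h | h
  · rw [relWord_eq] at h
    simpa using exists_eq_append_map_invLetter_of_isRotated h
  · rw [relWord_eq, invWord_append_map_invLetter] at h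
    simpa using exists_eq_append_map_invLetter_of_isRotated h

lemma eval_eq_one_of_mem_RSet {r : Word g} (hr : r ∈ RSet g) : eval r = 1 := by
  rcases hr with h | h
  · exact eval_eq_one_of_isRotated h eval_relWord
  · exact eval_eq_one_of_isRotated h (by rw [eval_invWord, eval_relWord, inv_one])

lemma conj_eval_eq_eval_reverse {b : Letter g} {u : Word g}
    (h : eval ((b :: u) ++ (b :: u).map invLetter) = 1) :
    letterElt b * eval u * (letterElt b)⁻¹ = eval u.reverse := by
  simp only [eval_append, eval_map_invLetter, List.reverse_cons, eval_cons, eval_nil, mul_one,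
    mul_inv_rev] at h
  rwa [← mul_assoc, mul_inv_eq_one] at h

end Relators

theorem relator_power_identity (g : ℕ) (hg : 2 ≤ g) (r : Word g) (hr : r ∈ RSet g)
    (t : ℕ) :
    eval (r.take 1 ++ wpow (seg r 1 (2 * g - 1)) t ++ seg r (2 * g) 1) =
        eval (wpow ((seg r 1 (2 * g - 1)).reverse) t) ∧
      ¬Irred (r.take 1 ++ wpow (seg r 1 (2 * g - 1)) t ++ seg r (2 * g) 1) := by
  obtain ⟨_ | ⟨b, u⟩, hlen, hr_eq⟩ := exists_eq_append_map_invLetter_of_mem_RSet hr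
  · simp at hlen; omega
  have hu : u.length = 2 * g - 1 := by simp at hlen; omega
  have hconj := conj_eval_eq_eval_reverse (hr_eq ▸ eval_eq_one_of_mem_RSet hr)
  have hfirst : r.take 1 = [b] := by simp [hr_eq]
  have hmiddle : seg r 1 (2 * g - 1) = u := by simp [hr_eq, seg, ← hu]
  have hlast : seg r (2 * g) 1 = [invLetter b] := by
    simp [hr_eq, seg, show 2 * g = u.length + 1 by omega]
  rw [hfirst, hmiddle, hlast]
  have heval : eval ([b] ++ wpow u t ++ [invLetter b]) = eval (wpow u.reverse t) := by
    rw [eval_append, eval_append, eval_wpow, eval_wpow, ← hconj, conj_pow]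
    simp
  refine ⟨heval, not_irred_of_eval_eq_of_length_lt heval.symm ?_⟩
  simp [length_wpow]

end Surface
end

section
/- Let g ≥ 2 and let G be the surface group with the symmetric presentation. Let b_1⋯b_{4g} and b'_1⋯b'_{4g} be elements of R and let k be an integer with 1 ≤ k ≤ 2g. If the elements b_1b_2⋯b_k and b'_1b'_2⋯b'_k of G are conjugate in G, then as words b_1⋯b_k = b'_1⋯b'_k, or b_1⋯b_k equals the reversed word b'_k b'_{k-1}⋯b'_1. -/
namespace Surface

/-!
The exponent sum of a letter is a conjugacy invariant, since it factors through an abelian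
quotient. A prefix of length `k ≤ 2g` of an element of `R` is an arc of the cyclic word
`c₁ ⋯ c_{2g} c₁⁻¹ ⋯ c_{2g}⁻¹`, read forwards or backwards. Its letters are distinct, and it never
contains a letter together with its inverse because these sit `2g` apart on the cycle; so its
exponent sums record exactly which letters it contains. Finally, an arc of at most half the
length of a cycle with distinct letters is determined by its set of letters.
-/

section ShortArcs

variable {α : Type*} [DecidableEq α] {l : List α} {k : ℕ}

theorem getElem_mem_take_iff_of_nodup (hl : l.Nodup) {i : ℕ} (hi : i < l.length) :
    l[i] ∈ l.take k ↔ i < k := by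
  rw [List.mem_take_iff_idxOf_lt (List.getElem_mem hi), hl.idxOf_getElem]

/-- The first letter of each arc must lie in the other, so each arc starts less than `k` steps
after the other; going around the cycle this way takes `length l ≥ 2k` steps. -/
theorem take_eq_of_isRotated_of_mem_take_iff (hl : l.Nodup) {l' : List α} (hrot : l ~r l')
    (hk : 2 * k ≤ l.length) (hmem : ∀ a, a ∈ l'.take k ↔ a ∈ l.take k) :
    l'.take k = l.take k := by
  rcases Nat.eq_zero_or_pos k with rfl | hk0
  · simp
  obtain ⟨s, rfl⟩ := hrot
  rw [← List.rotate_mod] at hmem ⊢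
  have hs : s % l.length < l.length := Nat.mod_lt _ (by omega)
  generalize s % l.length = m at hs hmem ⊢
  rcases Nat.eq_zero_or_pos m with rfl | hm0
  · rw [List.rotate_zero]
  have hl' : (l.rotate m).Nodup := List.nodup_rotate.mpr hl
  have hlen : (l.rotate m).length = l.length := List.length_rotate _ _
  have hm_lt : m < k := by
    have := (hmem _).mp ((getElem_mem_take_iff_of_nodup hl' (by omega)).mpr hk0)
    simp only [List.getElem_rotate, zero_add, Nat.mod_eq_of_lt hs] at this
    exact (getElem_mem_take_iff_of_nodup hl hs).mp this
  have hsub_lt : l.length - m < k := by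
    have := (hmem _).mpr ((getElem_mem_take_iff_of_nodup hl (by omega)).mpr hk0)
    have h0 : l[0]'(by omega) = (l.rotate m)[l.length - m]'(by omega) := by
      simp only [List.getElem_rotate, Nat.sub_add_cancel hs.le, Nat.mod_self]
    rwa [h0, getElem_mem_take_iff_of_nodup hl'] at this
  omega

end ShortArcs

section ExponentSums

variable {g : ℕ} {H : Type*} [CommGroup H]

theorem lift_relator (f : Fin (2 * g) → H) : FreeGroup.lift f (relator g) = 1 := by
  simp [relator, map_list_prod, List.map_ofFn, Function.comp_def, List.prod_ofFn]

def liftCommGroup (f : Fin (2 * g) → H) : SurfaceGroup g →* H :=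
  PresentedGroup.toGroup fun _ hr => (Set.mem_singleton_iff.mp hr) ▸ lift_relator f

theorem liftCommGroup_letterElt (f : Fin (2 * g) → H) (a : Letter g) :
    liftCommGroup f (letterElt a) = if a.2 then f a.1 else (f a.1)⁻¹ := by
  unfold letterElt
  split <;> simp [liftCommGroup]

def letterExp (a : Letter g) (w : Word g) : ℤ :=
  w.count a - w.count (invLetter a)

theorem letterExp_reverse (a : Letter g) (w : Word g) :
    letterExp a w.reverse = letterExp a w := by
  simp [letterExp]

theorem letterExp_eq_of_isConj (a : Letter g) {w w' : Word g}
    (h : IsConj (eval w) (eval w')) : letterExp a w = letterExp a w' := by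
  let φ : SurfaceGroup g →* Multiplicative ℤ :=
    liftCommGroup fun i => .ofAdd (if i = a.1 then (if a.2 then 1 else -1) else 0)
  have hφ : ∀ w : Word g, (φ (eval w)).toAdd = letterExp a w := by
    intro w
    induction w with
    | nil => simp [eval, letterExp]
    | cons b w ih =>
      obtain ⟨i, α⟩ := a
      obtain ⟨j, β⟩ := b
      simp only [eval, List.map_cons, List.prod_cons, map_mul] at ih ⊢
      rw [toAdd_mul, ih, liftCommGroup_letterElt]
      by_cases hji : j = i <;> cases α <;> cases β <;>
        simp [hji, letterExp, invLetter] <;> ring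
  simpa [hφ] using congrArg Multiplicative.toAdd (isConj_iff_eq.mp (φ.map_isConj h))

end ExponentSums

section RelatorArcs

variable {g : ℕ}

theorem length_relWord : (relWord g).length = 4 * g := by
  simp [relWord]; ring

theorem nodup_relWord : (relWord g).Nodup := by
  simp [relWord, List.nodup_append, List.nodup_ofFn, Function.Injective]

theorem map_invLetter_relWord : (relWord g).map invLetter = (relWord g).rotate (2 * g) := by
  have h := List.rotate_append_length_eq (List.ofFn fun i : Fin (2 * g) => ((i, true) : Letter g))
    (List.ofFn fun i => (i, false))
  rw [List.length_ofFn] at h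
  rw [relWord, h]
  simp [List.map_ofFn, Function.comp_def, invLetter]

def arc (g p k : ℕ) : Word g := ((relWord g).rotate p).take k

theorem nodup_arc (p k : ℕ) : (arc g p k).Nodup :=
  (List.nodup_rotate.mpr nodup_relWord).sublist (List.take_sublist _ _)

theorem map_invLetter_take_rotate_relWord (p : ℕ) :
    (((relWord g).rotate p).take (2 * g)).map invLetter = ((relWord g).rotate p).drop (2 * g) := by
  set M := (relWord g).rotate p
  have hM : M.map invLetter = M.drop (2 * g) ++ M.take (2 * g) := by
    rw [List.map_rotate, map_invLetter_relWord, List.rotate_rotate, add_comm, ← List.rotate_rotate,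
      List.rotate_eq_drop_append_take (by simp [length_relWord]; omega)]
  have := congrArg (List.take (2 * g)) hM
  rwa [← List.map_take, List.take_left' (by simp [M, length_relWord]; omega)] at this

theorem invLetter_not_mem_arc {p k : ℕ} (hk : k ≤ 2 * g) {a : Letter g} (ha : a ∈ arc g p k) :
    invLetter a ∉ arc g p k := by
  have hsub := List.take_subset_take_left ((relWord g).rotate p) hk
  intro hinv
  have hdrop : invLetter a ∈ ((relWord g).rotate p).drop (2 * g) := by
    rw [← map_invLetter_take_rotate_relWord]
    exact List.mem_map_of_mem (hsub ha)
  exact List.disjoint_take_drop (List.nodup_rotate.mpr nodup_relWord) le_rfl (hsub hinv) hdrop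

theorem mem_arc_iff_letterExp_eq_one {p k : ℕ} (hk : k ≤ 2 * g) {a : Letter g} :
    a ∈ arc g p k ↔ letterExp a (arc g p k) = 1 := by
  constructor
  · intro ha
    simp [letterExp, List.count_eq_one_of_mem (nodup_arc p k) ha,
      List.count_eq_zero_of_not_mem (invLetter_not_mem_arc hk ha)]
  · intro h
    rw [← List.count_pos_iff]
    simp only [letterExp] at h
    omega

theorem exists_take_eq_arc {r : Word g} (hr : r ∈ RSet g) {k : ℕ} (hk : k ≤ 4 * g) :
    ∃ p, r.take k = arc g p k ∨ r.take k = (arc g p k).reverse := by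
  rcases hr with hr | hr
  · obtain ⟨p, rfl⟩ := hr.symm
    exact ⟨p, Or.inl rfl⟩
  · have hrev : relWord g ~r r.reverse := by
      have h := hr.reverse
      rw [invWord, List.reverse_reverse, map_invLetter_relWord] at h
      exact (h.trans (List.IsRotated.forall _ _)).symm
    obtain ⟨p, hp⟩ := hrev
    refine ⟨p + (4 * g - k), Or.inr ?_⟩
    set M := (relWord g).rotate p
    have hlen : M.length = 4 * g := by simp [M, length_relWord]
    rw [← List.reverse_reverse r, ← hp, List.take_reverse, arc, ← List.rotate_rotate, hlen,
      List.rotate_eq_drop_append_take (l := M) (by omega), List.take_left' (by simp [hlen]; omega)]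

theorem arc_eq_of_letterExp_eq {p q k : ℕ} (hk : k ≤ 2 * g)
    (h : ∀ a, letterExp a (arc g p k) = letterExp a (arc g q k)) : arc g p k = arc g q k := by
  have hmem : ∀ a, a ∈ arc g p k ↔ a ∈ arc g q k := fun a => by
    rw [mem_arc_iff_letterExp_eq_one hk, mem_arc_iff_letterExp_eq_one hk, h]
  refine take_eq_of_isRotated_of_mem_take_iff (List.nodup_rotate.mpr nodup_relWord)
    ((List.IsRotated.forall (relWord g) q).trans (List.IsRotated.forall (relWord g) p).symm) ?_ hmem
  rw [List.length_rotate, length_relWord]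
  omega

end RelatorArcs

theorem conj_relator_prefix_general (g : ℕ) (r r' : Word g)
    (hr : r ∈ RSet g) (hr' : r' ∈ RSet g) (k : ℕ) (hk2 : k ≤ 2 * g)
    (hconj : IsConj (eval (r.take k)) (eval (r'.take k))) :
    r.take k = r'.take k ∨ r.take k = (r'.take k).reverse := by
  obtain ⟨p, hp⟩ := exists_take_eq_arc hr (k := k) (by omega)
  obtain ⟨q, hq⟩ := exists_take_eq_arc hr' (k := k) (by omega)
  have harc : arc g p k = arc g q k := by
    refine arc_eq_of_letterExp_eq hk2 fun a => ?_
    have := letterExp_eq_of_isConj a hconj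
    rcases hp with hp | hp <;> rcases hq with hq | hq <;>
      simpa only [hp, hq, letterExp_reverse] using this
  rcases hp with hp | hp <;> rcases hq with hq | hq <;>
    simp [hp, hq, harc]

theorem conj_relator_prefix (g : ℕ) (hg : 2 ≤ g) (r r' : Word g)
    (hr : r ∈ RSet g) (hr' : r' ∈ RSet g) (k : ℕ) (hk1 : 1 ≤ k) (hk2 : k ≤ 2 * g)
    (hconj : IsConj (eval (r.take k)) (eval (r'.take k))) :
    r.take k = r'.take k ∨ r.take k = (r'.take k).reverse :=
  conj_relator_prefix_general g r r' hr hr' k hk2 hconj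

end Surface
end
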